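/- Let μ be the uniform probability measure on the unit sphere S² ⊂ ℝ³ and let 0 < κ < 1. Then ∫_{S²} Ibin(κ·|n₃|) dμ(n) = ((1+κ)²·ln(1+κ) − (1−κ)²·ln(1−κ) − 2κ)/(4κ·ln 2), where n₃ is the third coordinate of n. -/

import Mathlib

/-!
Rotating in the plane of the first and third coordinates and rescaling gives
`∫ (c n₁ + n₃)^(2K) dμ = (1 + c²)^K ∫ n₃^(2K) dμ` for every real `c`; comparing the coefficients
of `c²` gives `∫ n₃^(2K) = (2K - 1) ∫ n₁² n₃^(2K-2)`. With `n₁² + n₂² + n₃² = 1` and the symmetry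
`n₁ ↔ n₂` this yields `∫ n₃^(2k) dμ = 1 / (2k + 1)`, the moments of the uniform distribution on
`[-1, 1]` (Archimedes). Expanding `Ibin` in its power series and integrating term by term leaves
`∑ κ^(2m+2) / ((m+1)(2m+1)(2m+3))`, summed through the partial fractions
`1/(2m+1) - 1/(m+1) + 1/(2m+3)`.
-/

open MeasureTheory Matrix

/-- Euclidean norm of a vector in ℝ³. -/
noncomputable def enorm3 (v : Fin 3 → ℝ) : ℝ := Real.sqrt (v 0 ^ 2 + v 1 ^ 2 + v 2 ^ 2)

/-- Euclidean inner product on ℝ³. -/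
def dot3 (v w : Fin 3 → ℝ) : ℝ := v 0 * w 0 + v 1 * w 1 + v 2 * w 2

/-- `μ` is the uniform (rotation-invariant) probability measure on the unit sphere
`S² = {v ∈ ℝ³ : |v| = 1}`: it is a probability measure, it gives full measure to the
sphere, and it is invariant under every orthogonal transformation of ℝ³. -/
def IsUniformSphereMeasure (μ : Measure (Fin 3 → ℝ)) : Prop :=
  IsProbabilityMeasure μ ∧
  μ {v | v 0 ^ 2 + v 1 ^ 2 + v 2 ^ 2 ≠ 1} = 0 ∧
  ∀ O : Matrix (Fin 3) (Fin 3) ℝ, O * Oᵀ = 1 → μ.map (Matrix.mulVec O) = μ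


/-- The binary mutual information `Ibin(x) = ((1+x)·log₂(1+x) + (1−x)·log₂(1−x))/2`. -/
noncomputable def Ibin (x : ℝ) : ℝ :=
  ((1 + x) * Real.logb 2 (1 + x) + (1 - x) * Real.logb 2 (1 - x)) / 2

namespace Real

variable {y : ℝ}

theorem hasSum_pow_two_mul_add_two_div_two_mul_add_one (hy : |y| < 1) :
    HasSum (fun m : ℕ => y ^ (2 * (m + 1)) / (2 * m + 1))
      (y * (log (1 + y) - log (1 - y)) / 2) :=
  (((hasSum_log_sub_log_of_abs_lt_one hy).mul_left y).div_const 2).congr_fun fun m => by ring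

theorem hasSum_pow_two_mul_add_two_div_add_one (hy : |y| < 1) :
    HasSum (fun m : ℕ => y ^ (2 * (m + 1)) / (m + 1)) (-log (1 + y) - log (1 - y)) := by
  have hy2 : |y ^ 2| < 1 := by simpa [abs_pow] using pow_lt_one₀ (abs_nonneg y) hy two_ne_zero
  have h1y : 0 < 1 + y := by linarith [neg_abs_le y]
  have h1y' : 0 < 1 - y := by linarith [le_abs_self y]
  have hlog : -log (1 - y ^ 2) = -log (1 + y) - log (1 - y) := by
    rw [show 1 - y ^ 2 = (1 + y) * (1 - y) by ring, log_mul h1y.ne' h1y'.ne']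
    ring
  rw [← hlog]
  exact (hasSum_pow_div_log_of_abs_lt_one hy2).congr_fun fun m => by rw [pow_mul]

theorem hasSum_pow_two_mul_add_two_div_two_mul_add_three (hy : |y| < 1) (hy0 : y ≠ 0) :
    HasSum (fun m : ℕ => y ^ (2 * (m + 1)) / (2 * m + 3))
      ((log (1 + y) - log (1 - y)) / (2 * y) - 1) := by
  have h := ((hasSum_nat_add_iff' 1).mpr (hasSum_log_sub_log_of_abs_lt_one hy)).div_const
    (2 * y)
  rw [Finset.sum_range_one] at h
  rw [show (log (1 + y) - log (1 - y)) / (2 * y) - 1 =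
    (log (1 + y) - log (1 - y) - 2 * (1 / (2 * ((0 : ℕ) : ℝ) + 1)) * y ^ (2 * 0 + 1)) / (2 * y) by
      field_simp; ring]
  refine h.congr_fun fun m => ?_
  push_cast
  field_simp
  ring

theorem hasSum_pow_div_mul_two_mul_add_one (hy : |y| < 1) :
    HasSum (fun m : ℕ => y ^ (2 * (m + 1)) / ((m + 1) * (2 * m + 1)))
      ((1 + y) * log (1 + y) + (1 - y) * log (1 - y)) := by
  have h := ((hasSum_pow_two_mul_add_two_div_two_mul_add_one hy).mul_left 2).sub
    (hasSum_pow_two_mul_add_two_div_add_one hy)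
  rw [show (1 + y) * log (1 + y) + (1 - y) * log (1 - y) =
    2 * (y * (log (1 + y) - log (1 - y)) / 2) - (-log (1 + y) - log (1 - y)) by ring]
  refine h.congr_fun fun m => ?_
  field_simp
  ring

theorem hasSum_pow_div_mul_two_mul_add_one_mul_two_mul_add_three (hy : |y| < 1) (hy0 : y ≠ 0) :
    HasSum (fun m : ℕ => y ^ (2 * (m + 1)) / ((m + 1) * (2 * m + 1) * (2 * m + 3)))
      (((1 + y) ^ 2 * log (1 + y) - (1 - y) ^ 2 * log (1 - y) - 2 * y) / (2 * y)) := by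
  have h := ((hasSum_pow_two_mul_add_two_div_two_mul_add_one hy).sub
    (hasSum_pow_two_mul_add_two_div_add_one hy)).add
    (hasSum_pow_two_mul_add_two_div_two_mul_add_three hy hy0)
  rw [show ((1 + y) ^ 2 * log (1 + y) - (1 - y) ^ 2 * log (1 - y) - 2 * y) / (2 * y) =
    y * (log (1 + y) - log (1 - y)) / 2 - (-log (1 + y) - log (1 - y)) +
      ((log (1 + y) - log (1 - y)) / (2 * y) - 1) by
    field_simp; ring]
  refine h.congr_fun fun m => ?_
  field_simp
  ring

end Real

theorem hasSum_Ibin {y : ℝ} (hy : |y| < 1) :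
    HasSum (fun m : ℕ => y ^ (2 * (m + 1)) / ((m + 1) * (2 * m + 1) * (2 * Real.log 2)))
      (Ibin y) := by
  rw [show Ibin y = ((1 + y) * Real.log (1 + y) + (1 - y) * Real.log (1 - y)) / (2 * Real.log 2) by
    simp only [Ibin, Real.logb]; ring]
  exact ((Real.hasSum_pow_div_mul_two_mul_add_one hy).div_const _).congr_fun fun m => by field_simp

theorem MeasureTheory.integral_tsum_mul_pow_of_abs_le_one {α : Type*} [MeasurableSpace α]
    {μ : Measure α} [IsFiniteMeasure μ] {X : α → ℝ} (hX : AEStronglyMeasurable X μ)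
    (hX1 : ∀ᵐ x ∂μ, |X x| ≤ 1) {a : ℕ → ℝ} (ha : Summable a) (e : ℕ → ℕ) :
    ∫ x, ∑' m, a m * X x ^ e m ∂μ = ∑' m, a m * ∫ x, X x ^ e m ∂μ := by
  have hbound : ∀ m, ∀ᵐ x ∂μ, ‖a m * X x ^ e m‖ ≤ |a m| := fun m => by
    filter_upwards [hX1] with x hx
    rw [Real.norm_eq_abs, abs_mul, abs_pow]
    exact mul_le_of_le_one_right (abs_nonneg _) (pow_le_one₀ (abs_nonneg _) hx)
  have hint : ∀ m, Integrable (fun x => a m * X x ^ e m) μ := fun m =>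
    Integrable.of_bound ((hX.pow _).const_mul _) _ (hbound m)
  have hsum : Summable fun m => ∫ x, ‖a m * X x ^ e m‖ ∂μ := by
    refine Summable.of_nonneg_of_le (fun m => integral_nonneg fun x => norm_nonneg _)
      (fun m => ?_) ((summable_abs_iff.2 ha).mul_right (μ.real Set.univ))
    calc ∫ x, ‖a m * X x ^ e m‖ ∂μ ≤ ∫ _, |a m| ∂μ :=
          integral_mono_of_nonneg (.of_forall fun x => norm_nonneg _) (integrable_const _)
            (hbound m)
      _ = |a m| * μ.real Set.univ := by rw [integral_const, smul_eq_mul, mul_comm]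
  rw [← integral_tsum_of_summable_integral_norm hint hsum]
  exact tsum_congr fun m => integral_const_mul _ _

namespace IsUniformSphereMeasure

variable {μ : Measure (Fin 3 → ℝ)}

theorem ae_sum_sq_eq_one (hμ : IsUniformSphereMeasure μ) :
    ∀ᵐ n ∂μ, n 0 ^ 2 + n 1 ^ 2 + n 2 ^ 2 = 1 :=
  ae_iff.2 hμ.2.1

theorem ae_abs_le_one (hμ : IsUniformSphereMeasure μ) : ∀ᵐ n ∂μ, ∀ i, |n i| ≤ 1 := by
  filter_upwards [hμ.ae_sum_sq_eq_one] with n hn i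
  refine (sq_le_one_iff_abs_le_one _).1 ?_
  fin_cases i <;> dsimp <;> nlinarith [sq_nonneg (n 0), sq_nonneg (n 1), sq_nonneg (n 2)]

theorem integrable_of_continuous (hμ : IsUniformSphereMeasure μ) {f : (Fin 3 → ℝ) → ℝ}
    (hf : Continuous f) : Integrable f μ := by
  have := hμ.1
  obtain ⟨C, hC⟩ := (isCompact_univ_pi fun _ => isCompact_Icc (a := (-1 : ℝ)) (b := 1))
    |>.exists_bound_of_continuousOn hf.continuousOn
  refine Integrable.of_bound hf.aestronglyMeasurable C ?_
  filter_upwards [hμ.ae_abs_le_one] with n hn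
  exact hC n fun i _ => abs_le.1 (hn i)

theorem integral_comp_mulVec (hμ : IsUniformSphereMeasure μ) {O : Matrix (Fin 3) (Fin 3) ℝ}
    (hO : O * Oᵀ = 1) {g : (Fin 3 → ℝ) → ℝ} (hg : AEStronglyMeasurable g μ) :
    ∫ n, g (O *ᵥ n) ∂μ = ∫ n, g n ∂μ := by
  rw [← integral_map (by fun_prop) (by rwa [hμ.2.2 O hO]), hμ.2.2 O hO]

theorem integral_pow_one_mul_eq_pow_zero_mul (hμ : IsUniformSphereMeasure μ) (i j : ℕ) :
    ∫ n, n 1 ^ i * n 2 ^ j ∂μ = ∫ n, n 0 ^ i * n 2 ^ j ∂μ := by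
  let σ : Equiv.Perm (Fin 3) := Equiv.swap 0 1
  have hσ : σ.permMatrix ℝ * (σ.permMatrix ℝ)ᵀ = 1 := by
    rw [transpose_permMatrix, ← permMatrix_mul, inv_mul_cancel, permMatrix_one]
  have h := hμ.integral_comp_mulVec hσ (g := fun n => n 0 ^ i * n 2 ^ j)
    (by fun_prop : Continuous fun n : Fin 3 → ℝ => n 0 ^ i * n 2 ^ j).aestronglyMeasurable
  simpa [permMatrix_mulVec, σ, Equiv.swap_apply_of_ne_of_ne] using h

theorem integral_add_pow_of_sq_add_sq_eq_one (hμ : IsUniformSphereMeasure μ) {a b : ℝ}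
    (hab : a ^ 2 + b ^ 2 = 1) (p : ℕ) :
    ∫ n, (a * n 0 + b * n 2) ^ p ∂μ = ∫ n, n 2 ^ p ∂μ := by
  let O : Matrix (Fin 3) (Fin 3) ℝ := !![b, 0, -a; 0, 1, 0; a, 0, b]
  have hO : O * Oᵀ = 1 := by
    ext i j
    fin_cases i <;> fin_cases j <;>
      simp [O, Matrix.mul_apply, Fin.sum_univ_three] <;> linarith
  have h := hμ.integral_comp_mulVec hO (g := fun n => n 2 ^ p)
    (by fun_prop : Continuous fun n : Fin 3 → ℝ => n 2 ^ p).aestronglyMeasurable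
  simpa [O, Matrix.mulVec, dotProduct, Fin.sum_univ_three] using h

theorem integral_mul_add_pow (hμ : IsUniformSphereMeasure μ) (c : ℝ) (K : ℕ) :
    ∫ n, (c * n 0 + n 2) ^ (2 * K) ∂μ = (c ^ 2 + 1) ^ K * ∫ n, n 2 ^ (2 * K) ∂μ := by
  set r := √(c ^ 2 + 1)
  have hr : 0 < r := Real.sqrt_pos.2 (by positivity)
  have hr2 : r ^ 2 = c ^ 2 + 1 := Real.sq_sqrt (by positivity)
  have hunit : (c / r) ^ 2 + (1 / r) ^ 2 = 1 := by
    field_simp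
    linarith
  have hscale : ∀ n : Fin 3 → ℝ,
      (c * n 0 + n 2) ^ (2 * K) = (c ^ 2 + 1) ^ K * (c / r * n 0 + 1 / r * n 2) ^ (2 * K) := by
    intro n
    rw [← hr2, ← pow_mul, ← mul_pow]
    congr 1
    field_simp
  simp_rw [hscale]
  rw [integral_const_mul, hμ.integral_add_pow_of_sq_add_sq_eq_one hunit]

theorem integral_mul_add_pow_eq_sum (hμ : IsUniformSphereMeasure μ) (c : ℝ) (p : ℕ) :
    ∫ n, (c * n 0 + n 2) ^ p ∂μ =
      ∑ i ∈ Finset.range (p + 1), p.choose i * c ^ i * ∫ n, n 0 ^ i * n 2 ^ (p - i) ∂μ := by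
  simp_rw [add_pow, mul_pow]
  rw [integral_finsetSum _ fun i _ => hμ.integrable_of_continuous (by fun_prop)]
  refine Finset.sum_congr rfl fun i _ => ?_
  rw [← integral_const_mul]
  exact integral_congr_ae (.of_forall fun n => by ring)

open Polynomial in
theorem integral_pow_two_mul_add_two (hμ : IsUniformSphereMeasure μ) (k : ℕ) :
    ∫ n, n 2 ^ (2 * (k + 1)) ∂μ = (2 * k + 1) * ∫ n, n 0 ^ 2 * n 2 ^ (2 * k) ∂μ := by
  set K := k + 1
  set M : ℕ → ℝ := fun i => ∫ n, n 0 ^ i * n 2 ^ (2 * K - i) ∂μ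
  -- Both sides of `integral_mul_add_pow` are polynomials in `c`: compare the coefficients of `c²`.
  let P : ℝ[X] := ∑ i ∈ Finset.range (2 * K + 1), C ((2 * K).choose i * M i) * X ^ i
  have hP : P = C (∫ n, n 2 ^ (2 * K) ∂μ) * expand ℝ 2 ((1 + X) ^ K) := by
    refine Polynomial.funext fun c => ?_
    have h := hμ.integral_mul_add_pow c K
    rw [integral_mul_add_pow_eq_sum hμ] at h
    simp only [P, M, eval_finsetSum, eval_mul, eval_C, eval_pow, eval_X, map_pow, map_add,
      map_one, expand_X, eval_add, eval_one]
    rw [add_comm 1, mul_comm _ ((c ^ 2 + 1) ^ K), ← h]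
    exact Finset.sum_congr rfl fun i _ => by ring
  have hcoeff := congrArg (coeff · 2) hP
  have h2K : 2 * K - 2 = 2 * k := by omega
  simp only [P, finsetSum_coeff, coeff_C_mul, coeff_X_pow, coeff_expand two_pos,
    coeff_one_add_X_pow, mul_ite, mul_one, mul_zero, Finset.sum_ite_eq, Finset.mem_range,
    dvd_refl, Nat.div_self two_pos, Nat.choose_one_right, M, h2K, Nat.cast_choose_two, if_true,
    show 2 < 2 * K + 1 by omega] at hcoeff
  push_cast [K] at hcoeff
  refine mul_right_cancel₀ (by positivity : (k : ℝ) + 1 ≠ 0) ?_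
  linear_combination -hcoeff

theorem integral_pow_two_mul (hμ : IsUniformSphereMeasure μ) (k : ℕ) :
    ∫ n, n 2 ^ (2 * k) ∂μ = 1 / (2 * k + 1) := by
  induction k with
  | zero =>
    have := hμ.1
    simp
  | succ k ih =>
    have hint : ∀ (i : Fin 3) (j : ℕ),
        Integrable (fun n : Fin 3 → ℝ => n i ^ j * n 2 ^ (2 * k)) μ :=
      fun i j => hμ.integrable_of_continuous (by fun_prop)
    have hsphere : ∫ n, n 2 ^ (2 * k) ∂μ =
        2 * ∫ n, n 0 ^ 2 * n 2 ^ (2 * k) ∂μ + ∫ n, n 2 ^ (2 * (k + 1)) ∂μ := by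
      calc ∫ n, n 2 ^ (2 * k) ∂μ
          = ∫ n, (n 0 ^ 2 * n 2 ^ (2 * k) + n 1 ^ 2 * n 2 ^ (2 * k)) +
              n 2 ^ 2 * n 2 ^ (2 * k) ∂μ := by
            refine integral_congr_ae ?_
            filter_upwards [hμ.ae_sum_sq_eq_one] with n hn
            linear_combination -(n 2 ^ (2 * k)) * hn
        _ = 2 * ∫ n, n 0 ^ 2 * n 2 ^ (2 * k) ∂μ + ∫ n, n 2 ^ (2 * (k + 1)) ∂μ := by
            rw [integral_add (by exact (hint 0 2).add (hint 1 2)) (hint 2 2),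
              integral_add (hint 0 2) (hint 1 2), hμ.integral_pow_one_mul_eq_pow_zero_mul]
            simp only [← pow_add, show 2 + 2 * k = 2 * (k + 1) by ring]
            ring
    rw [ih, hμ.integral_pow_two_mul_add_two] at hsphere
    rw [hμ.integral_pow_two_mul_add_two]
    field_simp at hsphere
    rw [eq_div_iff (by positivity)]
    push_cast
    linear_combination -hsphere

end IsUniformSphereMeasure

/-- Average RSP gain for the state `ρ⁰_2iso` with `E = κ·diag(0,0,1)`, for `0 < κ < 1`:
`∫ Ibin(κ|n₃|) dμ(n) = ((1+κ)²ln(1+κ) − (1−κ)²ln(1−κ) − 2κ)/(4κ ln 2)`. -/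
theorem stmt13 (μ : Measure (Fin 3 → ℝ)) (hμ : IsUniformSphereMeasure μ)
    (κ : ℝ) (hκ0 : 0 < κ) (hκ1 : κ < 1) :
    (∫ n, Ibin (κ * |n 2|) ∂μ) =
      ((1 + κ) ^ 2 * Real.log (1 + κ) - (1 - κ) ^ 2 * Real.log (1 - κ) - 2 * κ) /
        (4 * κ * Real.log 2) := by
  have := hμ.1
  have hκ : |κ| < 1 := by rwa [abs_of_pos hκ0]
  set a : ℕ → ℝ := fun m => κ ^ (2 * (m + 1)) / ((m + 1) * (2 * m + 1) * (2 * Real.log 2))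
  have hseries : ∀ᵐ n ∂μ, Ibin (κ * |n 2|) = ∑' m, a m * |n 2| ^ (2 * (m + 1)) := by
    filter_upwards [hμ.ae_abs_le_one] with n hn
    have hy : abs (κ * |n 2|) < 1 := by
      rw [abs_mul, abs_abs, abs_of_pos hκ0]
      nlinarith [hn 2, abs_nonneg (n 2)]
    rw [← (hasSum_Ibin hy).tsum_eq]
    exact tsum_congr fun m => by simp only [a]; ring
  have hmoment : ∀ m : ℕ, a m * ∫ n, |n 2| ^ (2 * (m + 1)) ∂μ =
      κ ^ (2 * (m + 1)) / ((m + 1) * (2 * m + 1) * (2 * m + 3)) / (2 * Real.log 2) := by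
    intro m
    simp only [(even_two_mul _).pow_abs, hμ.integral_pow_two_mul, a]
    push_cast
    field_simp
    ring
  rw [integral_congr_ae hseries, integral_tsum_mul_pow_of_abs_le_one
    (by fun_prop : Continuous fun n : Fin 3 → ℝ => |n 2|).aestronglyMeasurable
    (by simpa using hμ.ae_abs_le_one.mono fun n hn => hn 2) (hasSum_Ibin hκ).summable,
    tsum_congr hmoment,
    ((Real.hasSum_pow_div_mul_two_mul_add_one_mul_two_mul_add_three hκ hκ0.ne').div_const
      _).tsum_eq]
  field_simp
  ring
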